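/- Assume the closures of F(w) and F(w') are disjoint for all distinct words w, w' of equal length, and assume the separation condition: there exist ε₀ > 0 and n ∈ ℕ such that for every word w of length n there is a word w' of length n with d(a, b) ≥ ε₀ for all a ∈ closure(F(w)) and b ∈ closure(F(w')). Then the similarity map φ has sensitive dependence on initial conditions with sensitivity constant ε₀: for every x ∈ 𝓕 and every δ > 0 there exist y ∈ 𝓕 with d(x, y) < δ and k ∈ ℕ with d(φᵏ(x), φᵏ(y)) ≥ ε₀. -/

import Mathlib

/-!
Given `x = π i` and `δ > 0`, choose `N` so that all level-`N` cells have diameter `< δ`. Let `w`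
be the length-`n` block of `i` after position `N` and `w'` a block that is `ε₀`-separated from
it. The sequence `j` that agrees with `i` up to `N` and then reads `w'` codes a point `y` in the
same level-`N` cell as `x`, so `d(x, y) < δ`; and `φᴺ` shifts `x` into the cell of `w` and `y`
into the cell of `w'`, so `d(φᴺ x, φᴺ y) ≥ ε₀`.
-/

open Filter Set Metric Topology

/-- The length-`n` prefix word `(i 0, i 1, ..., i (n-1))` of an infinite sequence `i`. -/
def wordPrefix {m : ℕ} (i : ℕ → Fin m) (n : ℕ) : List (Fin m) :=
  (List.range n).map i

def prependWord {α : Type*} (u : List α) (s : ℕ → α) (t : ℕ) : α :=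
  if h : t < u.length then u[t] else s (t - u.length)

theorem length_wordPrefix {m : ℕ} (i : ℕ → Fin m) (n : ℕ) : (wordPrefix i n).length = n := by
  simp [wordPrefix]

theorem wordPrefix_prependWord {m : ℕ} (u : List (Fin m)) (s : ℕ → Fin m) :
    wordPrefix (prependWord u s) u.length = u :=
  List.ext_getElem (length_wordPrefix _ _) fun t ht _ => by
    simp_all [wordPrefix, prependWord]

theorem prependWord_add_length {α : Type*} (u : List α) (s : ℕ → α) :
    (fun t => prependWord u s (t + u.length)) = s := by
  funext t
  simp [prependWord]

section Coding

variable {X : Type*} {m : ℕ} {F : List (Fin m) → Set X} {π : (ℕ → Fin m) → X}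

theorem mem_closure_wordPrefix [TopologicalSpace X]
    (hπ : ∀ i : ℕ → Fin m, (⋂ n : ℕ, closure (F (wordPrefix i n))) = {π i})
    (i : ℕ → Fin m) (n : ℕ) : π i ∈ closure (F (wordPrefix i n)) :=
  mem_iInter.mp ((hπ i).symm ▸ mem_singleton (π i)) n

theorem dist_le_iSup_diam_of_wordPrefix_eq [PseudoMetricSpace X] [BoundedSpace X]
    (hπ : ∀ i : ℕ → Fin m, (⋂ n : ℕ, closure (F (wordPrefix i n))) = {π i})
    {i j : ℕ → Fin m} {N : ℕ} (hij : wordPrefix i N = wordPrefix j N) :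
    dist (π i) (π j) ≤ ⨆ w : {w : List (Fin m) // w.length = N}, diam (F w.1) := by
  have hbdd : BddAbove (range fun w : {w : List (Fin m) // w.length = N} => diam (F w.1)) :=
    ⟨diam (univ : Set X), by
      rintro _ ⟨w, rfl⟩
      exact diam_mono (subset_univ _) (Bornology.IsBounded.all _)⟩
  calc dist (π i) (π j) ≤ diam (closure (F (wordPrefix i N))) :=
        dist_le_diam_of_mem (Bornology.IsBounded.all _) (mem_closure_wordPrefix hπ i N)
          (hij ▸ mem_closure_wordPrefix hπ j N)
    _ = diam (F (wordPrefix i N)) := diam_closure _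
    _ ≤ _ := le_ciSup hbdd ⟨wordPrefix i N, length_wordPrefix i N⟩

theorem coe_iterate_of_coe_apply_eq_shift {φ : range π → range π}
    (hφ : ∀ i : ℕ → Fin m, (φ ⟨π i, mem_range_self i⟩ : X) = π (fun n => i (n + 1)))
    (k : ℕ) (i : ℕ → Fin m) :
    (φ^[k] ⟨π i, mem_range_self i⟩ : X) = π (fun t => i (t + k)) := by
  induction k generalizing i with
  | zero => rfl
  | succ k ih =>
    have hstep : φ ⟨π i, mem_range_self i⟩ = ⟨π (fun t => i (t + 1)), mem_range_self _⟩ :=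
      Subtype.ext (hφ i)
    rw [Function.iterate_succ_apply, hstep, ih]
    simp only [Nat.add_assoc]

end Coding

theorem abstract_fractal_similarity_map_sensitive_general
    {X : Type*} [MetricSpace X] [CompactSpace X] {m : ℕ}
    (F : List (Fin m) → Set X)
    (hdiam : Tendsto
      (fun n => ⨆ w : {w : List (Fin m) // w.length = n}, Metric.diam (F w.1))
      atTop (𝓝 0))
    (π : (ℕ → Fin m) → X)
    (hπ : ∀ i : ℕ → Fin m, (⋂ n : ℕ, closure (F (wordPrefix i n))) = {π i})
    (φ : Set.range π → Set.range π)
    (hφ : ∀ i : ℕ → Fin m,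
      (φ ⟨π i, Set.mem_range_self i⟩ : X) = π (fun n => i (n + 1)))
    (ε₀ : ℝ) (n : ℕ)
    (hsep : ∀ w : List (Fin m), w.length = n → ∃ w' : List (Fin m), w'.length = n ∧
      ∀ a ∈ closure (F w), ∀ b ∈ closure (F w'), ε₀ ≤ dist a b) :
    ∀ x : Set.range π, ∀ δ : ℝ, 0 < δ →
      ∃ y : Set.range π, dist (x : X) (y : X) < δ ∧
        ∃ k : ℕ, ε₀ ≤ dist (φ^[k] x : X) (φ^[k] y : X) := by
  rintro ⟨_, i, rfl⟩ δ hδ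
  obtain ⟨N, hN⟩ := (hdiam.eventually (gt_mem_nhds hδ)).exists
  obtain ⟨w', -, hw'⟩ := hsep (wordPrefix (fun t => i (t + N)) n) (length_wordPrefix _ n)
  set u := wordPrefix i N
  set j := prependWord u (prependWord w' i)
  have hu : u.length = N := length_wordPrefix i N
  refine ⟨⟨π j, mem_range_self j⟩, ?_, N, ?_⟩
  · have hjN : wordPrefix j N = u := hu ▸ wordPrefix_prependWord u _
    exact (dist_le_iSup_diam_of_wordPrefix_eq hπ hjN.symm).trans_lt hN
  · rw [coe_iterate_of_coe_apply_eq_shift hφ, coe_iterate_of_coe_apply_eq_shift hφ]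
    refine hw' _ (mem_closure_wordPrefix hπ _ n) _ ?_
    have hshift : (fun t => j (t + N)) = prependWord w' i := hu ▸ prependWord_add_length u _
    rw [hshift]
    simpa only [wordPrefix_prependWord] using mem_closure_wordPrefix hπ (prependWord w' i) w'.length

/-- Under the separation condition with constant `ε₀`, the similarity map `φ` has sensitive
dependence on initial conditions with sensitivity constant `ε₀`. -/
theorem abstract_fractal_similarity_map_sensitive
    {X : Type*} [MetricSpace X] [CompactSpace X] {m : ℕ} (hm : 2 ≤ m)
    (F : List (Fin m) → Set X)
    (hne : ∀ w : List (Fin m), (F w).Nonempty)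
    (hnest : ∀ (w : List (Fin m)) (j : Fin m), F (w ++ [j]) ⊆ F w)
    (hdiam : Tendsto
      (fun n => ⨆ w : {w : List (Fin m) // w.length = n}, Metric.diam (F w.1))
      atTop (𝓝 0))
    (π : (ℕ → Fin m) → X)
    (hπ : ∀ i : ℕ → Fin m, (⋂ n : ℕ, closure (F (wordPrefix i n))) = {π i})
    (hdisj : ∀ w w' : List (Fin m), w.length = w'.length → w ≠ w' →
      Disjoint (closure (F w)) (closure (F w')))
    (φ : Set.range π → Set.range π)
    (hφ : ∀ i : ℕ → Fin m,
      (φ ⟨π i, Set.mem_range_self i⟩ : X) = π (fun n => i (n + 1)))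
    (ε₀ : ℝ) (hε₀ : 0 < ε₀) (n : ℕ)
    (hsep : ∀ w : List (Fin m), w.length = n → ∃ w' : List (Fin m), w'.length = n ∧
      ∀ a ∈ closure (F w), ∀ b ∈ closure (F w'), ε₀ ≤ dist a b) :
    ∀ x : Set.range π, ∀ δ : ℝ, 0 < δ →
      ∃ y : Set.range π, dist (x : X) (y : X) < δ ∧
        ∃ k : ℕ, ε₀ ≤ dist (φ^[k] x : X) (φ^[k] y : X) :=
  abstract_fractal_similarity_map_sensitive_general F hdiam π hπ φ hφ ε₀ n hsep
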